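/- arXiv:2409.00995 — 3 statements merged into one kernel-verified Lean document; each statement's English description precedes it below -/
import Mathlib

section
/- Let balls be placed independently into urns labeled 1,2,3,..., with each ball going into urn k with probability p_k > 0, where Σ p_k = 1. Suppose there is a constant C > 0 with p_m ≤ C · p_{m+1} for all m ≥ 1. Let F_k be the number of balls in urn k after n balls are placed, and X_n = max{k : F_k > 0}. Then there exists c > 0 (depending only on C) such that for all m, h ≥ 1, P(F_m = h and X_n = m) ≤ exp(−c·h). -/
open MeasureTheory

/-- `urnCount n ω k` is the number of balls (out of `n`) placed in urn `k`,
when `ω i` is the urn of ball `i`. -/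
noncomputable def urnCount (n : ℕ) (ω : Fin n → ℕ) (k : ℕ) : ℕ :=
  Set.ncard {i : Fin n | ω i = k}

/-! On the event, every ball outside urn `m` lies in an urn `< m`, so a union bound over the set
of the `h` balls in urn `m` bounds its probability by `(n choose h) a^h b^(n-h)`, where
`a = p m`, `b = P(< m)`. With `q = P(> m)` the ratio condition gives `a ≤ C p (m+1) ≤ C q`, hence
`a ≤ r (a + q)` for `r = C / (C + 1)`, and the binomial theorem yields
`(n choose h) a^h b^(n-h) ≤ r^h (a + q + b)^n ≤ r^h`: one may take `c = log (1 + 1/C)`. -/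

open Finset
open scoped ENNReal NNReal

section CanonicallyOrdered

variable {R : Type*} [CommSemiring R] [PartialOrder R] [CanonicallyOrderedAdd R] [IsOrderedRing R]

theorem choose_mul_pow_mul_pow_le_add_pow (x y : R) (n h : ℕ) :
    n.choose h * x ^ h * y ^ (n - h) ≤ (x + y) ^ n := by
  rcases lt_or_ge n h with hnh | hhn
  · simp [Nat.choose_eq_zero_of_lt hnh]
  rw [add_pow]
  calc (n.choose h : R) * x ^ h * y ^ (n - h) = x ^ h * y ^ (n - h) * n.choose h := by ring
    _ ≤ ∑ k ∈ range (n + 1), x ^ k * y ^ (n - k) * n.choose k :=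
      single_le_sum (f := fun k => x ^ k * y ^ (n - k) * n.choose k) (fun _ _ => zero_le)
        (mem_range.2 (Nat.lt_succ_of_le hhn))

theorem choose_mul_pow_mul_pow_le_pow {a q b r : R} (n h : ℕ) (har : a ≤ r * (a + q))
    (hsum : a + q + b ≤ 1) : n.choose h * a ^ h * b ^ (n - h) ≤ r ^ h :=
  calc (n.choose h : R) * a ^ h * b ^ (n - h)
      ≤ n.choose h * (r * (a + q)) ^ h * b ^ (n - h) := by gcongr
    _ = r ^ h * (n.choose h * (a + q) ^ h * b ^ (n - h)) := by rw [mul_pow]; ring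
    _ ≤ r ^ h * (a + q + b) ^ n := by gcongr; exact choose_mul_pow_mul_pow_le_add_pow _ _ n h
    _ ≤ r ^ h := by grw [hsum, one_pow, mul_one]

end CanonicallyOrdered

theorem le_div_add_one_mul_add {a q : ℝ≥0∞} {C : ℝ≥0} (h : a ≤ C * q) :
    a ≤ (C / (C + 1) : ℝ≥0) * (a + q) := by
  rw [ENNReal.coe_div (by positivity), div_eq_mul_inv, mul_right_comm, ← div_eq_mul_inv,
    ENNReal.le_div_iff_mul_le (by simp) (by simp)]
  push_cast
  rw [mul_add, mul_add, mul_one, mul_comm a]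
  gcongr

theorem prod_ite_mem_const {ι M : Type*} [Fintype ι] [DecidableEq ι] [CommMonoid M]
    (S : Finset ι) (a b : M) :
    ∏ i, (if i ∈ S then a else b) = a ^ #S * b ^ (Fintype.card ι - #S) := by
  rw [prod_ite, prod_const, prod_const, filter_univ_mem, filter_not, filter_univ_mem,
    card_univ_sdiff]

theorem measure_pi_biUnion_powersetCard_le {α : Type*} [MeasurableSpace α] (μ : Measure α)
    [SigmaFinite μ] (s t : Set α) (n h : ℕ) :
    Measure.pi (fun _ : Fin n => μ)
        (⋃ S ∈ powersetCard h (univ : Finset (Fin n)), Set.univ.pi fun i => if i ∈ S then s else t)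
      ≤ n.choose h * μ s ^ h * μ t ^ (n - h) := by
  calc _ ≤ ∑ S ∈ powersetCard h (univ : Finset (Fin n)),
        Measure.pi (fun _ : Fin n => μ) (Set.univ.pi fun i => if i ∈ S then s else t) :=
        measure_biUnion_finset_le _ _
    _ = ∑ S ∈ powersetCard h (univ : Finset (Fin n)), μ s ^ h * μ t ^ (n - h) := by
        refine sum_congr rfl fun S hS => ?_
        simp only [Measure.pi_pi, apply_ite μ, prod_ite_mem_const, Fintype.card_fin,
          (mem_powersetCard.1 hS).2]
    _ = _ := by
        rw [sum_const, card_powersetCard, card_univ, Fintype.card_fin, nsmul_eq_mul, mul_assoc]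

theorem measure_singleton_add_Ioi_add_Iio (μ : Measure ℕ) [IsProbabilityMeasure μ] (m : ℕ) :
    μ {m} + μ (Set.Ioi m) + μ (Set.Iio m) = 1 := by
  rw [← measure_union (by simp) (by measurability), Set.singleton_union, Set.Ioi_insert,
    ← Set.compl_Ici, measure_add_measure_compl (by measurability), measure_univ]

theorem urnCount_eq_card_filter (n : ℕ) (ω : Fin n → ℕ) (k : ℕ) :
    urnCount n ω k = #{i | ω i = k} := by
  rw [urnCount, ← Set.ncard_coe_finset, coe_filter_univ]

theorem le_of_forall_lt_urnCount_eq_zero {n m : ℕ} {ω : Fin n → ℕ}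
    (htop : ∀ k, m < k → urnCount n ω k = 0) (i : Fin n) : ω i ≤ m := by
  by_contra! hi
  have hpos : 0 < urnCount n ω (ω i) := (Set.ncard_pos (Set.toFinite _)).2 ⟨i, rfl⟩
  exact hpos.ne' (htop _ hi)

theorem mem_biUnion_powersetCard_of_urnCount {n m h : ℕ} {ω : Fin n → ℕ}
    (hcount : urnCount n ω m = h) (htop : ∀ k, m < k → urnCount n ω k = 0) :
    ω ∈ ⋃ S ∈ powersetCard h (univ : Finset (Fin n)),
      Set.univ.pi fun i => if i ∈ S then {m} else Set.Iio m := by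
  rw [urnCount_eq_card_filter] at hcount
  refine Set.mem_biUnion (mem_powersetCard.2 ⟨subset_univ _, hcount⟩) fun i _ => ?_
  by_cases hi : ω i = m
  · simp [hi]
  · simpa [hi] using lt_of_le_of_ne (le_of_forall_lt_urnCount_eq_zero htop i) hi

/-- Urn model: `n` balls are placed independently, each in urn `k` with probability `p k > 0`
(for `k ≥ 1`).  If `p m ≤ C * p (m+1)` for all `m ≥ 1`, then there is `c > 0`
(depending only on `C`) such that for all `m, h ≥ 1`,
`P(F_m = h and X_n = m) ≤ exp (-c * h)`, where `F_k` is the number of balls in urn `k`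
and `X_n = max {k | F_k > 0}`. -/
theorem stmt0 (C : NNReal) (hC : 0 < C) :
    ∃ c : ℝ, 0 < c ∧
      ∀ (p : PMF ℕ), p 0 = 0 → (∀ k, 1 ≤ k → p k ≠ 0) →
        (∀ m, 1 ≤ m → p m ≤ C * p (m + 1)) →
        ∀ (n m h : ℕ), 1 ≤ m → 1 ≤ h →
          (Measure.pi fun _ : Fin n => p.toMeasure)
              {ω | urnCount n ω m = h ∧ 0 < urnCount n ω m ∧ ∀ k, m < k → urnCount n ω k = 0}
            ≤ ENNReal.ofReal (Real.exp (-c * h)) := by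
  set r : ℝ≥0 := C / (C + 1)
  have hr0 : 0 < (r : ℝ) := by positivity
  have hr1 : (r : ℝ) < 1 := by
    simpa [r] using (div_lt_one (by positivity)).2 (lt_add_one (C : ℝ))
  refine ⟨-Real.log r, neg_pos.2 (Real.log_neg hr0 hr1), ?_⟩
  intro p _ _ hpC n m h hm _
  have hexp : ENNReal.ofReal (Real.exp (-(-Real.log r) * h)) = (r : ℝ≥0∞) ^ h := by
    rw [neg_neg, mul_comm, Real.exp_nat_mul, Real.exp_log hr0, ENNReal.ofReal_pow hr0.le,
      ENNReal.ofReal_coe_nnreal]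
  have hpm : p.toMeasure {m} ≤ C * p.toMeasure (Set.Ioi m) := by
    rw [p.toMeasure_apply_singleton m (measurableSet_singleton m)]
    grw [hpC m hm, ← p.toMeasure_apply_singleton _ (measurableSet_singleton _)]
    gcongr
    exact Set.singleton_subset_iff.2 (Nat.lt_succ_self m)
  rw [hexp]
  calc _ ≤ _ := measure_mono fun ω hω => mem_biUnion_powersetCard_of_urnCount hω.1 hω.2.2
    _ ≤ n.choose h * p.toMeasure {m} ^ h * p.toMeasure (Set.Iio m) ^ (n - h) :=
        measure_pi_biUnion_powersetCard_le _ _ _ n h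
    _ ≤ r ^ h := choose_mul_pow_mul_pow_le_pow n h (le_div_add_one_mul_add hpm)
        (measure_singleton_add_Ioi_add_Iio _ m).le
end

section
/- In the urn model, fix m > 0 and integers 0 < g_m < f_m < m and J_m > 0. Suppose there is a constant C > 0 such that p_k ≤ C·p_l for all k ∈ (m − g_m, m] and l ∈ (m − f_m, m − g_m]. Then for every j ∈ ℕ, the conditional probability P( Σ_{k=m−g_m+1}^{m} F_k = j+1 | X_n = m, Σ_{k=m−f_m+1}^{m} F_k ≤ J_m ) is at most C' · (g_m/f_m)^j · J_m^j for a constant C' depending only on C and j. -/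
/-!
A switching argument. Given a configuration in the conditioning event `S` with `j + 1` balls in
the top `g` urns `(m - g, m]`, keep one ball of urn `m` in place and move each of the other `j`
into any of the `f - g` urns of `(m - f, m - g]`. This yields `(f - g) ^ j` configurations, all
still in `S` and each at least `C⁻ʲ` times as likely. Conversely a configuration of `S` arises in
at most `(J g) ^ j` ways: the moved balls are `j` of the at most `J` balls in `(m - f, m - g]`,
each coming from one of `g` urns. Hence `(f - g) ^ j P(S ∩ T) ≤ C ^ j (J g) ^ j P(S)`. When
`2 g ≤ f` this is the claim because `f - g ≥ f / 2`; otherwise the claimed bound is at least `1`.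
-/

open MeasureTheory ProbabilityTheory

open scoped ENNReal NNReal

lemma ENNReal.tsum_indicator_const {α : Type*} (s : Set α) (c : ℝ≥0∞) :
    ∑' x, s.indicator (fun _ => c) x = s.encard * c :=
  (tsum_subtype s _).symm.trans (ENNReal.tsum_set_const s c)

theorem measure_mul_le_of_relation {α β : Type*} [MeasurableSpace α] [MeasurableSpace β]
    [Countable α] [Countable β] [MeasurableSingletonClass α] [MeasurableSingletonClass β]
    (μ : Measure α) (ν : Measure β) (R : α → β → Prop) {A : Set α} {B : Set β} {d₁ d₂ : ℕ}
    {K : ℝ≥0∞} (hA : ∀ a ∈ A, (d₁ : ℕ∞) ≤ {b | R a b}.encard)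
    (hB : ∀ b ∈ B, {a | R a b}.encard ≤ d₂) (hRB : ∀ a b, R a b → b ∈ B)
    (hμν : ∀ a b, R a b → μ {a} ≤ K * ν {b}) :
    d₁ * μ A ≤ K * d₂ * ν B := by
  rw [← Measure.tsum_indicator_apply_singleton μ A (Set.to_countable A).measurableSet,
    ← Measure.tsum_indicator_apply_singleton ν B (Set.to_countable B).measurableSet,
    ← ENNReal.tsum_mul_left, mul_assoc, ← ENNReal.tsum_mul_left, ← ENNReal.tsum_mul_left]
  calc ∑' a, (d₁ : ℝ≥0∞) * A.indicator (fun a => μ {a}) a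
      ≤ ∑' a, ∑' b, {b | R a b}.indicator (fun _ => μ {a}) b := by
        refine ENNReal.tsum_le_tsum fun a => ?_
        rw [ENNReal.tsum_indicator_const]
        by_cases ha : a ∈ A
        · rw [Set.indicator_of_mem ha]
          gcongr
          exact_mod_cast hA a ha
        · simp [ha]
    _ ≤ ∑' a, ∑' b, {b | R a b}.indicator (fun b => K * ν {b}) b := by
        refine ENNReal.tsum_le_tsum fun a => ENNReal.tsum_le_tsum fun b => ?_
        by_cases h : R a b
        · simp only [Set.indicator_of_mem (show b ∈ {b | R a b} from h)]
          exact hμν a b h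
        · simp [h]
    _ = ∑' b, ∑' a, {a | R a b}.indicator (fun _ => K * ν {b}) a := ENNReal.tsum_comm
    _ ≤ ∑' b, K * (d₂ * B.indicator (fun b => ν {b}) b) := by
        refine ENNReal.tsum_le_tsum fun b => ?_
        rw [ENNReal.tsum_indicator_const]
        by_cases hb : b ∈ B
        · rw [Set.indicator_of_mem hb, mul_left_comm]
          gcongr
          exact_mod_cast hB b hb
        · have : {a | R a b} = ∅ := Set.eq_empty_of_forall_notMem fun a h => hb (hRB a b h)
          simp [this]

lemma cond_mul_le_of_mul_measure_inter_le {Ω : Type*} [MeasurableSpace Ω] {μ : Measure Ω}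
    {s t : Set Ω} (hs : MeasurableSet s) {a b : ℝ≥0∞} (h : a * μ (s ∩ t) ≤ b * μ s) :
    a * μ[t | s] ≤ b := by
  rw [cond_apply hs, mul_left_comm]
  calc (μ s)⁻¹ * (a * μ (s ∩ t)) ≤ (μ s)⁻¹ * (b * μ s) := by gcongr
    _ = b * ((μ s)⁻¹ * μ s) := by ring
    _ ≤ b := mul_le_of_le_one_right' (ENNReal.inv_mul_le_one _)

lemma le_of_sub_pow_mul_le {C J g f x : ℝ} (j : ℕ) (hC : 0 ≤ C) (hJ : 1 ≤ J) (hg : 0 < g)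
    (hgf : g < f) (hx1 : x ≤ 1) (hx : (f - g) ^ j * x ≤ (C * (J * g)) ^ j) :
    x ≤ (2 * C + 2) ^ j * (g / f) ^ j * J ^ j := by
  rw [← mul_pow, ← mul_pow]
  by_cases h2g : 2 * g ≤ f
  · have hbase : C * (J * g) / (f - g) ≤ (2 * C + 2) * (g / f) * J := by
      rw [div_le_iff₀ (by linarith), mul_div_assoc', div_mul_eq_mul_div, div_mul_eq_mul_div,
        le_div_iff₀ (by linarith)]
      nlinarith [mul_nonneg hC (mul_nonneg (by linarith : (0 : ℝ) ≤ J) hg.le),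
        mul_nonneg (by linarith : (0 : ℝ) ≤ J) hg.le]
    calc x ≤ (C * (J * g)) ^ j / (f - g) ^ j := by
          rw [le_div_iff₀ (pow_pos (by linarith) j), mul_comm]; exact hx
      _ = (C * (J * g) / (f - g)) ^ j := (div_pow _ _ _).symm
      _ ≤ _ := pow_le_pow_left₀ (by have := sub_pos.2 hgf; positivity) hbase j
  · have hbase : 1 ≤ (2 * C + 2) * (g / f) * J := by
      have : 1 ≤ 2 * (g / f) := by rw [← mul_div_assoc, one_le_div (by linarith)]; linarith
      have hq : 0 ≤ g / f := div_nonneg hg.le (by linarith)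
      calc 1 ≤ 2 * (g / f) * 1 := by linarith
        _ ≤ (2 * C + 2) * (g / f) * J := by gcongr; linarith
    exact hx1.trans (one_le_pow₀ hbase)

section Urn

variable {n : ℕ}

def ballsIn (ω : Fin n → ℕ) (K : Finset ℕ) : Finset (Fin n) :=
  Finset.univ.filter fun i => ω i ∈ K

lemma urnCount_eq_card_ballsIn (ω : Fin n → ℕ) (k : ℕ) :
    urnCount n ω k = (ballsIn ω {k}).card := by
  rw [urnCount, ← Set.ncard_coe_finset]
  congr 1
  ext i
  simp [ballsIn]

lemma sum_urnCount_eq_card_ballsIn (ω : Fin n → ℕ) (K : Finset ℕ) :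
    ∑ k ∈ K, urnCount n ω k = (ballsIn ω K).card := by
  rw [Finset.card_eq_sum_card_fiberwise (s := ballsIn ω K) (t := K) fun i hi =>
    (Finset.mem_filter.1 hi).2]
  refine Finset.sum_congr rfl fun k hk => ?_
  rw [urnCount_eq_card_ballsIn]
  congr 1
  ext i
  simp only [ballsIn, Finset.mem_filter, Finset.mem_univ, Finset.mem_singleton, true_and]
  exact ⟨fun h => ⟨h ▸ hk, h⟩, And.right⟩

lemma urnCount_pos_iff {ω : Fin n → ℕ} {k : ℕ} : 0 < urnCount n ω k ↔ ∃ i, ω i = k := by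
  simp [urnCount_eq_card_ballsIn, Finset.card_pos, Finset.Nonempty, ballsIn]

lemma urnCount_eq_zero_iff {ω : Fin n → ℕ} {k : ℕ} : urnCount n ω k = 0 ↔ ∀ i, ω i ≠ k := by
  simp [urnCount_eq_card_ballsIn, ballsIn, Finset.filter_eq_empty_iff]

lemma forall_urnCount_eq_zero_iff {ω : Fin n → ℕ} {m : ℕ} :
    (∀ k, m < k → urnCount n ω k = 0) ↔ ∀ i, ω i ≤ m := by
  simp only [urnCount_eq_zero_iff]
  exact ⟨fun h i => not_lt.1 fun hi => h _ hi i rfl, fun h k hk i hi => (h i).not_gt (hi ▸ hk)⟩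

def window (m g : ℕ) : Finset ℕ := Finset.Icc (m - g + 1) m

def lowerWindow (m g f : ℕ) : Finset ℕ := Finset.Icc (m - f + 1) (m - g)

-- The first ball of urn `m` is never moved, so that urn `m` stays the last occupied one.
noncomputable def movedBalls (m g : ℕ) (ω : Fin n → ℕ) : Finset (Fin n) :=
  if h : (ballsIn ω {m}).Nonempty then (ballsIn ω (window m g)).erase ((ballsIn ω {m}).min' h)
  else ∅

noncomputable def relocations (m g f : ℕ) (ω : Fin n → ℕ) : Finset (Fin n → ℕ) :=
  Fintype.piFinset fun i => if i ∈ movedBalls m g ω then lowerWindow m g f else {ω i}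

def conditioningEvent (n m f J : ℕ) : Set (Fin n → ℕ) :=
  {ω | (0 < urnCount n ω m ∧ ∀ k, m < k → urnCount n ω k = 0) ∧
    ∑ k ∈ window m f, urnCount n ω k ≤ J}

def topCountEvent (n m g j : ℕ) : Set (Fin n → ℕ) :=
  {ω | ∑ k ∈ window m g, urnCount n ω k = j + 1}

variable {m g f j J : ℕ} {ω ω' : Fin n → ℕ}

lemma movedBalls_subset : movedBalls m g ω ⊆ ballsIn ω (window m g) := by
  unfold movedBalls
  split
  · exact Finset.erase_subset _ _
  · exact Finset.empty_subset _

lemma mem_window_of_mem_movedBalls {i : Fin n} (hi : i ∈ movedBalls m g ω) :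
    m - g < ω i ∧ ω i ≤ m := by
  have := (Finset.mem_filter.1 (movedBalls_subset hi)).2
  simp only [window, Finset.mem_Icc] at this
  omega

lemma exists_notMem_movedBalls (h : 0 < urnCount n ω m) :
    ∃ i, ω i = m ∧ i ∉ movedBalls m g ω := by
  rw [urnCount_eq_card_ballsIn, Finset.card_pos] at h
  refine ⟨(ballsIn ω {m}).min' h, ?_, ?_⟩
  · simpa [ballsIn] using Finset.min'_mem _ h
  · rw [movedBalls, dif_pos h]
    exact Finset.notMem_erase _ _

lemma card_movedBalls (hg : 0 < g) (hgm : g ≤ m) (h : 0 < urnCount n ω m) :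
    (movedBalls m g ω).card = (ballsIn ω (window m g)).card - 1 := by
  rw [urnCount_eq_card_ballsIn, Finset.card_pos] at h
  have hmem : (ballsIn ω {m}).min' h ∈ ballsIn ω (window m g) := by
    have := Finset.min'_mem _ h
    simp only [ballsIn, Finset.mem_filter, Finset.mem_univ, Finset.mem_singleton,
      true_and] at this ⊢
    simp only [this, window, Finset.mem_Icc]
    omega
  rw [movedBalls, dif_pos h, Finset.card_erase_of_mem hmem]

lemma card_window (hgm : g ≤ m) : (window m g).card = g := by
  simp only [window, Nat.card_Icc]
  omega

lemma card_lowerWindow (hfm : f ≤ m) : (lowerWindow m g f).card = f - g := by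
  simp only [lowerWindow, Nat.card_Icc]
  omega

lemma card_relocations (hfm : f ≤ m) :
    (relocations m g f ω).card = (f - g) ^ (movedBalls m g ω).card := by
  rw [relocations, Fintype.card_piFinset]
  simp only [apply_ite Finset.card, card_lowerWindow hfm, Finset.card_singleton]
  rw [Fintype.prod_ite_mem, Finset.prod_const]

lemma mem_lowerWindow_of_mem_relocations (hω' : ω' ∈ relocations m g f ω) {i : Fin n}
    (hi : i ∈ movedBalls m g ω) : m - f < ω' i ∧ ω' i ≤ m - g := by
  have := Fintype.mem_piFinset.1 hω' i
  rw [if_pos hi, lowerWindow, Finset.mem_Icc] at this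
  omega

lemma eq_of_mem_relocations (hω' : ω' ∈ relocations m g f ω) {i : Fin n}
    (hi : i ∉ movedBalls m g ω) : ω' i = ω i := by
  simpa [hi] using Fintype.mem_piFinset.1 hω' i

lemma ballsIn_window_eq_of_mem_relocations (hω' : ω' ∈ relocations m g f ω) :
    ballsIn ω' (window m f) = ballsIn ω (window m f) := by
  refine Finset.filter_congr fun i _ => ?_
  by_cases hi : i ∈ movedBalls m g ω
  · have h := mem_window_of_mem_movedBalls hi
    have h' := mem_lowerWindow_of_mem_relocations hω' hi
    simp only [window, Finset.mem_Icc]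
    omega
  · rw [eq_of_mem_relocations hω' hi]

lemma relocation_mem_conditioningEvent (hω : ω ∈ conditioningEvent n m f J)
    (hω' : ω' ∈ relocations m g f ω) : ω' ∈ conditioningEvent n m f J := by
  obtain ⟨⟨hm, hlast⟩, hJ⟩ := hω
  rw [forall_urnCount_eq_zero_iff] at hlast
  refine ⟨⟨?_, ?_⟩, ?_⟩
  · obtain ⟨i, hi, hmoved⟩ := exists_notMem_movedBalls (g := g) hm
    exact urnCount_pos_iff.2 ⟨i, by rw [eq_of_mem_relocations hω' hmoved, hi]⟩
  · rw [forall_urnCount_eq_zero_iff]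
    intro i
    by_cases hi : i ∈ movedBalls m g ω
    · have := mem_lowerWindow_of_mem_relocations hω' hi
      omega
    · rw [eq_of_mem_relocations hω' hi]
      exact hlast i
  · rwa [sum_urnCount_eq_card_ballsIn, ballsIn_window_eq_of_mem_relocations hω',
      ← sum_urnCount_eq_card_ballsIn]

lemma prod_le_pow_mul_prod_of_mem_relocations (p : ℕ → ℝ≥0∞) (C : ℝ≥0∞)
    (hp : ∀ k l : ℕ, m - g < k → k ≤ m → m - f < l → l ≤ m - g → p k ≤ C * p l)
    (hω' : ω' ∈ relocations m g f ω) :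
    ∏ i, p (ω i) ≤ C ^ (movedBalls m g ω).card * ∏ i, p (ω' i) := by
  calc ∏ i, p (ω i) ≤ ∏ i, (if i ∈ movedBalls m g ω then C else 1) * p (ω' i) := by
        refine Finset.prod_le_prod' fun i _ => ?_
        by_cases hi : i ∈ movedBalls m g ω
        · have h := mem_window_of_mem_movedBalls hi
          have h' := mem_lowerWindow_of_mem_relocations hω' hi
          rw [if_pos hi]
          exact hp _ _ h.1 h.2 h'.1 h'.2
        · rw [if_neg hi, one_mul, eq_of_mem_relocations hω' hi]
    _ = C ^ (movedBalls m g ω).card * ∏ i, p (ω' i) := by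
        rw [Finset.prod_mul_distrib, Fintype.prod_ite_mem, Finset.prod_const]

def relocationSources (m g f j : ℕ) (ω' : Fin n → ℕ) : Finset (Fin n → ℕ) :=
  ((ballsIn ω' (lowerWindow m g f)).powersetCard j).biUnion fun M =>
    Fintype.piFinset fun i => if i ∈ M then window m g else {ω' i}

lemma mem_relocationSources (hM : (movedBalls m g ω).card = j)
    (hω' : ω' ∈ relocations m g f ω) : ω ∈ relocationSources m g f j ω' := by
  refine Finset.mem_biUnion.2 ⟨movedBalls m g ω, Finset.mem_powersetCard.2 ⟨?_, hM⟩, ?_⟩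
  · intro i hi
    have := mem_lowerWindow_of_mem_relocations hω' hi
    simp only [ballsIn, lowerWindow, Finset.mem_filter, Finset.mem_univ, Finset.mem_Icc, true_and]
    omega
  · refine Fintype.mem_piFinset.2 fun i => ?_
    by_cases hi : i ∈ movedBalls m g ω
    · rw [if_pos hi]
      exact (Finset.mem_filter.1 (movedBalls_subset hi)).2
    · rw [if_neg hi, eq_of_mem_relocations hω' hi, Finset.mem_singleton]

lemma card_relocationSources_le (hgm : g ≤ m) :
    (relocationSources m g f j ω').card ≤ (ballsIn ω' (lowerWindow m g f)).card ^ j * g ^ j := by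
  calc (relocationSources m g f j ω').card
      ≤ ∑ M ∈ (ballsIn ω' (lowerWindow m g f)).powersetCard j, g ^ j := by
        refine Finset.card_biUnion_le.trans (Finset.sum_le_sum fun M hM => ?_)
        rw [Fintype.card_piFinset]
        simp only [apply_ite Finset.card, card_window hgm, Finset.card_singleton]
        rw [Fintype.prod_ite_mem, Finset.prod_const, (Finset.mem_powersetCard.1 hM).2]
    _ ≤ _ := by
        rw [Finset.sum_const, Finset.card_powersetCard, smul_eq_mul]
        exact Nat.mul_le_mul_right _ (Nat.choose_le_pow _ _)

lemma card_ballsIn_lowerWindow_le (hω' : ω' ∈ conditioningEvent n m f J) :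
    (ballsIn ω' (lowerWindow m g f)).card ≤ J := by
  refine (Finset.card_le_card fun i hi => ?_).trans (sum_urnCount_eq_card_ballsIn ω' _ ▸ hω'.2)
  simp only [ballsIn, lowerWindow, window, Finset.mem_filter, Finset.mem_univ, Finset.mem_Icc,
    true_and] at hi ⊢
  omega

theorem measure_inter_topCountEvent_le (p : PMF ℕ) (C : ℝ≥0)
    (hp : ∀ k l : ℕ, m - g < k → k ≤ m → m - f < l → l ≤ m - g → p k ≤ C * p l)
    (hg : 0 < g) (hgf : g ≤ f) (hfm : f ≤ m) :
    (((f - g) ^ j : ℕ) : ℝ≥0∞) * (Measure.pi fun _ : Fin n => p.toMeasure)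
        (conditioningEvent n m f J ∩ topCountEvent n m g j)
      ≤ (C : ℝ≥0∞) ^ j * (((J * g) ^ j : ℕ) : ℝ≥0∞) *
        (Measure.pi fun _ : Fin n => p.toMeasure) (conditioningEvent n m f J) := by
  set S := conditioningEvent n m f J
  set T := topCountEvent n m g j
  have hcard : ∀ ω ∈ S ∩ T, (movedBalls m g ω).card = j := by
    rintro ω ⟨⟨⟨hm, -⟩, -⟩, hT⟩
    rw [card_movedBalls hg (hgf.trans hfm) hm, ← sum_urnCount_eq_card_ballsIn, hT,
      Nat.add_sub_cancel]
  refine measure_mul_le_of_relation _ _ (fun ω ω' => ω ∈ S ∩ T ∧ ω' ∈ relocations m g f ω)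
    (fun ω hω => ?_) (fun ω' hω' => ?_) (fun ω ω' h => relocation_mem_conditioningEvent h.1.1 h.2)
    (fun ω ω' h => ?_)
  · have : {ω' | ω ∈ S ∩ T ∧ ω' ∈ relocations m g f ω} = relocations m g f ω := by
      ext ω'
      simp [hω]
    rw [this, Set.encard_coe_eq_coe_finsetCard, card_relocations hfm, hcard ω hω]
  · calc {ω | ω ∈ S ∩ T ∧ ω' ∈ relocations m g f ω}.encard
        ≤ (relocationSources m g f j ω' : Set (Fin n → ℕ)).encard :=
          Set.encard_le_encard fun ω h => mem_relocationSources (hcard ω h.1) h.2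
      _ = (relocationSources m g f j ω').card := Set.encard_coe_eq_coe_finsetCard _
      _ ≤ ((J * g) ^ j : ℕ) := by
          refine Nat.cast_le.2 ((card_relocationSources_le (hgf.trans hfm)).trans ?_)
          rw [mul_pow]
          gcongr
          exact card_ballsIn_lowerWindow_le hω'
  · rw [← hcard ω h.1]
    simp only [Measure.pi_singleton, PMF.toMeasure_apply_singleton _ _ (measurableSet_singleton _)]
    exact prod_le_pow_mul_prod_of_mem_relocations _ _ hp h.2

end Urn

theorem stmt1_general (C : NNReal) (j : ℕ) :
    ∃ C' : ℝ, 0 < C' ∧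
      ∀ (p : PMF ℕ), p 0 = 0 → (∀ k, 1 ≤ k → p k ≠ 0) →
        ∀ (m g f J : ℕ), 0 < g → g < f → f < m → 0 < J →
          (∀ k l : ℕ, m - g < k → k ≤ m → m - f < l → l ≤ m - g → p k ≤ C * p l) →
          ∀ n : ℕ,
            ProbabilityTheory.cond (Measure.pi fun _ : Fin n => p.toMeasure)
                {ω | (0 < urnCount n ω m ∧ ∀ k, m < k → urnCount n ω k = 0) ∧
                      ∑ k ∈ Finset.Icc (m - f + 1) m, urnCount n ω k ≤ J}
                {ω | ∑ k ∈ Finset.Icc (m - g + 1) m, urnCount n ω k = j + 1}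
              ≤ ENNReal.ofReal (C' * ((g : ℝ) / f) ^ j * (J : ℝ) ^ j) := by
  refine ⟨(2 * C + 2) ^ j, by positivity, fun p _ _ m g f J hg hgf hfm hJ hp n => ?_⟩
  set μ := Measure.pi fun _ : Fin n => p.toMeasure
  change μ[topCountEvent n m g j | conditioningEvent n m f J] ≤ _
  have hcond := cond_mul_le_of_mul_measure_inter_le (Set.to_countable _).measurableSet
    (measure_inter_topCountEvent_le (n := n) (j := j) (J := J) p C hp hg hgf.le hfm.le)
  rw [ENNReal.le_ofReal_iff_toReal_le (measure_ne_top _ _) (by positivity)]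
  refine le_of_sub_pow_mul_le j C.coe_nonneg (by exact_mod_cast hJ) (by exact_mod_cast hg)
    (by exact_mod_cast hgf)
    (ENNReal.toReal_le_of_le_ofReal zero_le_one (by simpa using prob_le_one)) ?_
  have := ENNReal.toReal_mono (by simp [ENNReal.mul_eq_top]) hcond
  simp only [ENNReal.toReal_mul, ENNReal.toReal_natCast, ENNReal.toReal_pow,
    ENNReal.coe_toReal] at this
  push_cast [Nat.cast_sub hgf.le] at this
  rwa [mul_pow]

/-- Urn model: `n` balls placed independently, each in urn `k` with probability `p k > 0`.
Fix `0 < g < f < m` and `J > 0`.  If `p k ≤ C * p l` for all `k ∈ (m-g, m]` and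
`l ∈ (m-f, m-g]`, then for every `j`,
`P( Σ_{k=m-g+1}^m F_k = j+1 | X_n = m, Σ_{k=m-f+1}^m F_k ≤ J ) ≤ C' (g/f)^j J^j`
for a constant `C'` depending only on `C` and `j`. -/
theorem stmt1 (C : NNReal) (hC : 0 < C) (j : ℕ) :
    ∃ C' : ℝ, 0 < C' ∧
      ∀ (p : PMF ℕ), p 0 = 0 → (∀ k, 1 ≤ k → p k ≠ 0) →
        ∀ (m g f J : ℕ), 0 < g → g < f → f < m → 0 < J →
          (∀ k l : ℕ, m - g < k → k ≤ m → m - f < l → l ≤ m - g → p k ≤ C * p l) →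
          ∀ n : ℕ,
            ProbabilityTheory.cond (Measure.pi fun _ : Fin n => p.toMeasure)
                {ω | (0 < urnCount n ω m ∧ ∀ k, m < k → urnCount n ω k = 0) ∧
                      ∑ k ∈ Finset.Icc (m - f + 1) m, urnCount n ω k ≤ J}
                {ω | ∑ k ∈ Finset.Icc (m - g + 1) m, urnCount n ω k = j + 1}
              ≤ ENNReal.ofReal (C' * ((g : ℝ) / f) ^ j * (J : ℝ) ^ j) :=
  stmt1_general C j
end

section
/- Given any four distinct points x_1, x_2, x_3, x_4 ∈ ℤ^2, there exists at least one of the following six pairings of ℤ^2 — X_j = {(x, x+e_j) : x, x+e_j appropriately matched} for j = 1,2,3,4 (pairing each point with its neighbor in direction e_j according to parity), Y = {((2a,b),(2a+1,b))}, and Y' = {((2a+1,b),(2a+2,b))} — such that every pair in that pairing contains at most one of the points x_1, x_2, x_3, x_4. -/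
/-- The pairing of `ℤ²` matching each point `x` with even coordinate sum to `x + e`
(and each point with odd coordinate sum to `x - e`), given as the "partner" map. -/
def pairDir (e : ℤ × ℤ) (x : ℤ × ℤ) : ℤ × ℤ :=
  if (x.1 + x.2) % 2 = 0 then x + e else x - e

/-- The pairing `Y` of `ℤ²` matching `(2a, b)` with `(2a+1, b)`, as a partner map. -/
def pairY (x : ℤ × ℤ) : ℤ × ℤ :=
  if x.1 % 2 = 0 then (x.1 + 1, x.2) else (x.1 - 1, x.2)

/-- The pairing `Y'` of `ℤ²` matching `(2a+1, b)` with `(2a+2, b)`, as a partner map. -/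
def pairY' (x : ℤ × ℤ) : ℤ × ℤ :=
  if x.1 % 2 = 0 then (x.1 - 1, x.2) else (x.1 + 1, x.2)

/-!
If none of the pairings works, the (at most four) points contain a vertical domino
`{a, a + e₂}` with `a.1 + a.2` even and one with `a.1 + a.2` odd (from `X₂` and `X₄`), and
horizontal dominoes `{u, u + e₁}` with `u.1` even and odd (from `Y` and `Y'`). Two distinct
vertical dominoes already use three or four of the points: either three points in one column,
and then every horizontal domino joins that column to the single point off it, or the points are
exactly the two vertical dominoes, and then every horizontal domino joins their two columns.
Either way all horizontal dominoes start in the same column, which contradicts the parities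
coming from `Y` and `Y'`.
-/

lemma Finset.eq_of_notMem_of_card_le_succ {α : Type*} [DecidableEq α] {S T : Finset α} {s t : α}
    (hTS : T ⊆ S) (hcard : S.card ≤ T.card + 1) (hs : s ∈ S) (ht : t ∈ S)
    (hsT : s ∉ T) (htT : t ∉ T) : s = t := by
  have : (S \ T).card ≤ 1 := by rw [Finset.card_sdiff_of_subset hTS]; omega
  exact Finset.card_le_one.mp this s (Finset.mem_sdiff.mpr ⟨hs, hsT⟩) t
    (Finset.mem_sdiff.mpr ⟨ht, htT⟩)

section Dominoes

variable {S : Finset (ℤ × ℤ)} {a b u z : ℤ × ℤ}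

lemma fst_eq_of_three_in_column (hS : S.card ≤ 4) (ha : a ∈ S) (ha₁ : a + (0, 1) ∈ S)
    (ha₂ : a + (0, 2) ∈ S) (hu : u ∈ S) (hu' : u + (1, 0) ∈ S) (hz : z ∈ S)
    (hz' : z + (1, 0) ∈ S) : u.1 = z.1 := by
  have hcol : ({a, a + (0, 1), a + (0, 2)} : Finset (ℤ × ℤ)).card = 3 := by
    rw [Finset.card_eq_three]
    exact ⟨_, _, _, by simp [Prod.ext_iff], by simp [Prod.ext_iff], by simp [Prod.ext_iff], rfl⟩
  have hsub : ({a, a + (0, 1), a + (0, 2)} : Finset (ℤ × ℤ)) ⊆ S := by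
    simp [Finset.insert_subset_iff, ha, ha₁, ha₂]
  have off_column : ∀ s ∈ S, ∀ t ∈ S, s.1 ≠ a.1 → t.1 ≠ a.1 → s.1 = t.1 := by
    intro s hs t ht hsa hta
    have hst := Finset.eq_of_notMem_of_card_le_succ hsub (by omega) hs ht
      (by simp [Prod.ext_iff, hsa]) (by simp [Prod.ext_iff, hta])
    rw [hst]
  have hu₀ := off_column u hu _ hu'
  have hz₀ := off_column z hz _ hz'
  have huz := off_column u hu _ hz'
  have hzu := off_column z hz _ hu'
  simp only [Prod.fst_add] at *
  omega

lemma fst_eq_min_of_mem_two_vertical (hu : u ∈ ({a, a + (0, 1), b, b + (0, 1)} : Finset _))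
    (hu' : u + (1, 0) ∈ ({a, a + (0, 1), b, b + (0, 1)} : Finset _)) : u.1 = min a.1 b.1 := by
  simp only [Finset.mem_insert, Finset.mem_singleton, Prod.ext_iff, Prod.fst_add,
    Prod.snd_add] at hu hu'
  omega

lemma fst_eq_of_two_vertical (hS : S.card ≤ 4) (hab : a ≠ b) (ha : a ∈ S)
    (ha' : a + (0, 1) ∈ S) (hb : b ∈ S) (hb' : b + (0, 1) ∈ S) (hu : u ∈ S)
    (hu' : u + (1, 0) ∈ S) (hz : z ∈ S) (hz' : z + (1, 0) ∈ S) : u.1 = z.1 := by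
  by_cases hba : b = a + (0, 1)
  · subst hba
    exact fst_eq_of_three_in_column hS ha ha' (by simpa [add_assoc] using hb') hu hu' hz hz'
  by_cases hab' : a = b + (0, 1)
  · subst hab'
    exact fst_eq_of_three_in_column hS hb hb' (by simpa [add_assoc] using ha') hu hu' hz hz'
  have hcard : ({a, a + (0, 1), b, b + (0, 1)} : Finset (ℤ × ℤ)).card = 4 := by
    simp only [ne_eq, Prod.ext_iff, Prod.fst_add, Prod.snd_add] at hab hba hab'
    rw [Finset.card_insert_of_notMem, Finset.card_insert_of_notMem, Finset.card_pair] <;>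
      simp [Prod.ext_iff] <;> omega
  have hS_eq : ({a, a + (0, 1), b, b + (0, 1)} : Finset (ℤ × ℤ)) = S :=
    Finset.eq_of_subset_of_card_le (by simp [Finset.insert_subset_iff, ha, ha', hb, hb']) (by omega)
  rw [← hS_eq] at hu hu' hz hz'
  rw [fst_eq_min_of_mem_two_vertical hu hu', fst_eq_min_of_mem_two_vertical hz hz']

end Dominoes

section PairsInside

variable {S : Finset (ℤ × ℤ)} {p : ℤ × ℤ}

lemma exists_even_domino_of_pairDir {e : ℤ × ℤ} (he : (e.1 + e.2) % 2 = 1) (hp : p ∈ S)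
    (hq : pairDir e p ∈ S) : ∃ a ∈ S, a + e ∈ S ∧ (a.1 + a.2) % 2 = 0 := by
  unfold pairDir at hq
  split_ifs at hq with hpar
  · exact ⟨p, hp, hq, hpar⟩
  · exact ⟨p - e, hq, by simpa using hp, by simp only [Prod.fst_sub, Prod.snd_sub]; omega⟩

lemma exists_odd_domino_of_pairDir_neg {e : ℤ × ℤ} (he : (e.1 + e.2) % 2 = 1) (hp : p ∈ S)
    (hq : pairDir (-e) p ∈ S) : ∃ a ∈ S, a + e ∈ S ∧ (a.1 + a.2) % 2 = 1 := by
  unfold pairDir at hq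
  split_ifs at hq with hpar
  · refine ⟨p + -e, hq, by simpa using hp, ?_⟩
    simp only [Prod.fst_add, Prod.snd_add, Prod.fst_neg, Prod.snd_neg]
    omega
  · exact ⟨p, hp, by simpa using hq, by omega⟩

lemma exists_even_domino_of_pairY (hp : p ∈ S) (hq : pairY p ∈ S) :
    ∃ u ∈ S, u + (1, 0) ∈ S ∧ u.1 % 2 = 0 := by
  unfold pairY at hq
  split_ifs at hq with hpar
  · exact ⟨p, hp, by simpa [Prod.add_def] using hq, hpar⟩
  · exact ⟨_, hq, by simpa using hp, by omega⟩

lemma exists_odd_domino_of_pairY' (hp : p ∈ S) (hq : pairY' p ∈ S) :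
    ∃ u ∈ S, u + (1, 0) ∈ S ∧ u.1 % 2 = 1 := by
  unfold pairY' at hq
  split_ifs at hq with hpar
  · exact ⟨_, hq, by simpa using hp, by omega⟩
  · exact ⟨p, hp, by simpa [Prod.add_def] using hq, by omega⟩

end PairsInside

theorem stmt14_general (x : Fin 4 → ℤ × ℤ) :
    ∃ f ∈ ({pairDir (1, 0), pairDir (0, 1), pairDir (-1, 0), pairDir (0, -1), pairY, pairY'} :
        Set ((ℤ × ℤ) → ℤ × ℤ)),
      ∀ i j : Fin 4, i ≠ j → f (x i) ≠ x j := by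
  by_contra! h
  set S := Finset.univ.image x
  have hS : S.card ≤ 4 := Finset.card_image_le.trans (by simp)
  have pair_inside (f : ℤ × ℤ → ℤ × ℤ) (hf : ∃ i j, i ≠ j ∧ f (x i) = x j) :
      ∃ p ∈ S, f p ∈ S := by
    obtain ⟨i, j, -, hij⟩ := hf
    exact ⟨x i, by simp [S], by simp [S, hij]⟩
  obtain ⟨p₂, hp₂, hq₂⟩ := pair_inside _ (h (pairDir (0, 1)) (by simp))
  obtain ⟨p₄, hp₄, hq₄⟩ := pair_inside _ (h (pairDir (0, -1)) (by simp))
  obtain ⟨p, hp, hq⟩ := pair_inside _ (h pairY (by simp))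
  obtain ⟨p', hp', hq'⟩ := pair_inside _ (h pairY' (by simp))
  obtain ⟨a, ha, ha', ha_even⟩ := exists_even_domino_of_pairDir (by decide) hp₂ hq₂
  obtain ⟨b, hb, hb', hb_odd⟩ :=
    exists_odd_domino_of_pairDir_neg (e := (0, 1)) (by decide) hp₄ hq₄
  obtain ⟨u, hu, hu', hu_even⟩ := exists_even_domino_of_pairY hp hq
  obtain ⟨z, hz, hz', hz_odd⟩ := exists_odd_domino_of_pairY' hp' hq'
  have hab : a ≠ b := by rintro rfl; omega
  have := fst_eq_of_two_vertical hS hab ha ha' hb hb' hu hu' hz hz'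
  omega

/-- Given any four distinct points of `ℤ²`, at least one of the six pairings
`X₁, X₂, X₃, X₄` (pairing in direction `e_j` according to parity), `Y`, `Y'` is such that
every pair of the pairing contains at most one of the four points. -/
theorem stmt14 (x : Fin 4 → ℤ × ℤ) (hx : Function.Injective x) :
    ∃ f ∈ ({pairDir (1, 0), pairDir (0, 1), pairDir (-1, 0), pairDir (0, -1), pairY, pairY'} :
        Set ((ℤ × ℤ) → ℤ × ℤ)),
      ∀ i j : Fin 4, i ≠ j → f (x i) ≠ x j :=
  stmt14_general x
end
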